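/- arXiv:1910.01208 — 4 statements merged into one kernel-verified Lean document; each statement's English description precedes it below -/
import Mathlib

section
/- Let X be a finite ground set and f : Finset X → ℝ be monotone, submodular, and normalized, with curvature at most ν. Let a finite robot set R be partitioned into nonempty cliques C_1, …, C_K, and let α be a natural number. Suppose that for each k ∈ {1,…,K}: (i) there is a set of bait robots D_k ⊆ C_k with |D_k| = min(α, |C_k|), a valid assignment B_k for D_k, and a valid assignment G_k for C_k \ D_k; (ii) (bait domination) for every bait action b ∈ B_k, assigned to robot r ∈ D_k, and every action x ∈ X_r ∪ ⋃_{i ∈ C_k \ D_k} X_i, one has f({b}) ≥ f({x}); and (iii) (greedy guarantee) f(G_k) ≥ (1/2)·f(T) for every valid assignment T for C_k \ D_k. Let S = ⋃_{k=1}^K (B_k ∪ G_k). Then for every attack A ⊆ S with |A| ≤ α and every valid assignment S' for R, there exists A' ⊆ S' with |A'| ≤ α such that f(S \ A) ≥ ((1 − ν)/2)·f(S' \ A'). In other words, min_{A ⊆ S, |A| ≤ α} f(S \ A) ≥ ((1 − ν)/2)·max_{S' valid for R} min_{A' ⊆ S', |A'| ≤ α} f(S' \ A'). -/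
/-- `f` is monotone (non-decreasing). -/
def IsMonotoneFn {X : Type*} (f : Finset X → ℝ) : Prop :=
  ∀ ⦃A B : Finset X⦄, A ⊆ B → f A ≤ f B

/-- `f` is submodular. -/
def IsSubmodularFn {X : Type*} [DecidableEq X] (f : Finset X → ℝ) : Prop :=
  ∀ ⦃A B : Finset X⦄, A ⊆ B → ∀ x ∉ B, f (insert x A) - f A ≥ f (insert x B) - f B

/-- `f` is normalized. -/
def IsNormalizedFn {X : Type*} (f : Finset X → ℝ) : Prop := f ∅ = 0

/-- `f` has curvature at most `ν`. -/
def CurvatureLE {X : Type*} [DecidableEq X] (f : Finset X → ℝ) (ν : ℝ) : Prop :=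
  ∀ S : Finset X, ∀ x ∈ S, f S - f (S \ {x}) ≥ (1 - ν) * f {x}

/-- `S` is a valid assignment for the robots in `R'`: it consists of actions available
to the robots of `R'`, one action per robot. -/
def ValidAssign {X ι : Type*} [DecidableEq X] [DecidableEq ι]
    (Xact : ι → Finset X) (R' : Finset ι) (S : Finset X) : Prop :=
  S ⊆ R'.biUnion Xact ∧ ∀ i ∈ R', (S ∩ Xact i).card = 1

set_option linter.unusedSectionVars false
section Aux
variable {X ι : Type*} [DecidableEq X] [DecidableEq ι] {f : Finset X → ℝ}

lemma aux_nonneg (hmono : IsMonotoneFn f) (hnorm : IsNormalizedFn f) (T : Finset X) :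
    0 ≤ f T := hnorm ▸ hmono (Finset.empty_subset T)

lemma aux_sing (hsub : IsSubmodularFn f) (hnorm : IsNormalizedFn f) (T : Finset X) :
    f T ≤ ∑ x ∈ T, f {x} := by
  induction T using Finset.induction_on with
  | empty => rw [Finset.sum_empty]; exact le_of_eq hnorm
  | @insert a s ha ih =>
    have h := hsub (Finset.empty_subset s) a ha
    rw [Finset.insert_empty] at h
    rw [Finset.sum_insert ha]
    have h0 : f (∅ : Finset X) = 0 := hnorm
    linarith

lemma aux_subadd (hmono : IsMonotoneFn f) (hsub : IsSubmodularFn f)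
    (hnorm : IsNormalizedFn f) (T U : Finset X) : f (T ∪ U) ≤ f T + f U := by
  induction U using Finset.induction_on with
  | empty => rw [Finset.union_empty, hnorm]; linarith
  | @insert a s ha ih =>
    by_cases haT : a ∈ T ∪ s
    · have h1 : T ∪ insert a s = T ∪ s := by
        rw [Finset.union_insert, Finset.insert_eq_self.mpr haT]
      have h2 : f s ≤ f (insert a s) := hmono (Finset.subset_insert a s)
      rw [h1]; linarith
    · have h3 := hsub (Finset.subset_union_right (s₁ := T)) a haT
      rw [Finset.union_insert]
      linarith [hmono (Finset.subset_insert a s)]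

lemma aux_biUnion (hmono : IsMonotoneFn f) (hsub : IsSubmodularFn f)
    (hnorm : IsNormalizedFn f) (s : Finset ι) (P : ι → Finset X) :
    f (s.biUnion P) ≤ ∑ i ∈ s, f (P i) := by
  induction s using Finset.induction_on with
  | empty => rw [Finset.biUnion_empty, Finset.sum_empty]; exact le_of_eq hnorm
  | @insert a s ha ih =>
    rw [Finset.biUnion_insert, Finset.sum_insert ha]
    calc f (P a ∪ s.biUnion P) ≤ f (P a) + f (s.biUnion P) := aux_subadd hmono hsub hnorm _ _
    _ ≤ _ := by linarith

lemma aux_curv {ν : ℝ} (hnorm : IsNormalizedFn f) (hcurv : CurvatureLE f ν) (T : Finset X) :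
    (1 - ν) * ∑ x ∈ T, f {x} ≤ f T := by
  induction T using Finset.induction_on with
  | empty => rw [Finset.sum_empty, mul_zero]; exact ge_of_eq hnorm
  | @insert a s ha ih =>
    have h := hcurv (insert a s) a (Finset.mem_insert_self a s)
    rw [Finset.sdiff_singleton_eq_erase, Finset.erase_insert ha] at h
    rw [Finset.sum_insert ha, mul_add]
    linarith

lemma aux_disjU (Xact : ι → Finset X) (hXdisj : ∀ i j : ι, i ≠ j → Disjoint (Xact i) (Xact j))
    {s t : Finset ι} (h : Disjoint s t) :
    Disjoint (s.biUnion Xact) (t.biUnion Xact) := by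
  rw [Finset.disjoint_left]
  intro x hx hx'
  obtain ⟨i, hi, hxi⟩ := Finset.mem_biUnion.mp hx
  obtain ⟨j, hj, hxj⟩ := Finset.mem_biUnion.mp hx'
  have hij : i ≠ j := fun he => (Finset.disjoint_left.mp h hi) (he ▸ hj)
  exact (Finset.disjoint_left.mp (hXdisj i j hij) hxi) hxj

lemma aux_sdiff_biUnion (s : Finset ι) (P : ι → Finset X) (A : Finset X) :
    (s.biUnion P) \ A = s.biUnion (fun i => P i \ A) := by
  ext x
  simp only [Finset.mem_sdiff, Finset.mem_biUnion]
  tauto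

lemma aux_valid_card {Xact : ι → Finset X} (hXdisj : ∀ i j : ι, i ≠ j → Disjoint (Xact i) (Xact j))
    {R' : Finset ι} {T : Finset X} (h : ValidAssign Xact R' T) : T.card = R'.card := by
  obtain ⟨h1, h2⟩ := h
  have hT : T = R'.biUnion (fun i => T ∩ Xact i) := by
    ext x
    simp only [Finset.mem_biUnion, Finset.mem_inter]
    constructor
    · intro hx
      obtain ⟨r, hr, hxr⟩ := Finset.mem_biUnion.mp (h1 hx)
      exact ⟨r, hr, hx, hxr⟩
    · rintro ⟨r, hr, hx, _⟩; exact hx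
  rw [hT, Finset.card_biUnion (fun i hi j hj hij =>
    (hXdisj i j hij).mono Finset.inter_subset_right Finset.inter_subset_right)]
  rw [Finset.sum_congr rfl h2, Finset.sum_const, smul_eq_mul, mul_one]

lemma aux_match {κ κ' : Type*} (s : Finset κ) (t : Finset κ') (d : κ → ℝ) (c : κ' → ℝ)
    (h : t.card = s.card) (hdom : ∀ i ∈ s, ∀ j ∈ t, c j ≤ d i) :
    ∑ j ∈ t, c j ≤ ∑ i ∈ s, d i := by
  classical
  induction s using Finset.induction_on generalizing t with
  | empty =>
    rw [Finset.card_empty, Finset.card_eq_zero] at h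
    simp [h]
  | @insert a s ha ih =>
    rw [Finset.card_insert_of_notMem ha] at h
    have hne : t.Nonempty := Finset.card_pos.mp (by omega)
    obtain ⟨j, hj⟩ := hne
    rw [← Finset.add_sum_erase t c hj, Finset.sum_insert ha]
    have h1 : c j ≤ d a := hdom a (Finset.mem_insert_self a s) j hj
    have h2 : ∑ j' ∈ t.erase j, c j' ≤ ∑ i ∈ s, d i := by
      apply ih
      · rw [Finset.card_erase_of_mem hj]; omega
      · exact fun i hi j' hj' => hdom i (Finset.mem_insert_of_mem hi) j' (Finset.erase_subset j t hj')
    linarith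
end Aux

lemma clique_sum {X ι : Type*} [DecidableEq X] [DecidableEq ι]
    (f : Finset X → ℝ) (hmono : IsMonotoneFn f) (hsub : IsSubmodularFn f)
    (hnorm : IsNormalizedFn f)
    (Xact : ι → Finset X) (hXdisj : ∀ i j : ι, i ≠ j → Disjoint (Xact i) (Xact j))
    (Dk CDk : Finset ι) (hDC : Disjoint Dk CDk)
    (Bk Gk : Finset X) (hB : ValidAssign Xact Dk Bk) (hG : ValidAssign Xact CDk Gk)
    (hbait : ∀ r ∈ Dk, ∀ b ∈ Bk ∩ Xact r, ∀ x ∈ Xact r ∪ CDk.biUnion Xact, f {b} ≥ f {x})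
    (A : Finset X) (ha : (A ∩ (Bk ∪ Gk)).card ≤ Dk.card)
    (s' : ι → X) (hs' : ∀ r ∈ Dk, s' r ∈ Xact r) :
    ∃ D' ⊆ Dk, D'.card = Dk.card - (A ∩ (Bk ∪ Gk)).card ∧
      f Gk + ∑ r ∈ D', f {s' r} ≤ ∑ x ∈ (Bk ∪ Gk) \ A, f {x} := by
  classical
  obtain ⟨hBsub, hBcard⟩ := hB
  obtain ⟨hGsub, hGcard⟩ := hG
  have hfnn : ∀ T : Finset X, 0 ≤ f T := aux_nonneg hmono hnorm
  have hBGdisj : Disjoint Bk Gk := (aux_disjU Xact hXdisj hDC).mono hBsub hGsub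
  set W : Finset ι := Dk.filter (fun r => ((Bk ∩ Xact r) \ A).Nonempty) with hWdef
  have hBk_eq : Bk = Dk.biUnion (fun r => Bk ∩ Xact r) := by
    ext x
    simp only [Finset.mem_biUnion, Finset.mem_inter]
    constructor
    · intro hx
      obtain ⟨r, hr, hxr⟩ := Finset.mem_biUnion.mp (hBsub hx)
      exact ⟨r, hr, hx, hxr⟩
    · rintro ⟨r, hr, hx, _⟩; exact hx
  have hpd : (↑Dk : Set ι).PairwiseDisjoint (fun r => (Bk ∩ Xact r) \ A) := by
    intro i _ j _ hij
    exact (hXdisj i j hij).mono (Finset.sdiff_subset.trans Finset.inter_subset_right)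
      (Finset.sdiff_subset.trans Finset.inter_subset_right)
  have hBA_eq : Bk \ A = Dk.biUnion (fun r => (Bk ∩ Xact r) \ A) := by
    conv_lhs => rw [hBk_eq]
    exact aux_sdiff_biUnion _ _ _
  have hterm1 : ∀ r ∈ Dk, ((Bk ∩ Xact r) \ A).card ≤ 1 := fun r hr =>
    le_trans (Finset.card_le_card Finset.sdiff_subset) (le_of_eq (hBcard r hr))
  have hcardW : (Bk \ A).card = W.card := by
    rw [hBA_eq, Finset.card_biUnion (fun i hi j hj hij => hpd hi hj hij), hWdef,
      Finset.card_filter]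
    refine Finset.sum_congr rfl (fun r hr => ?_)
    by_cases hne : ((Bk ∩ Xact r) \ A).Nonempty
    · rw [if_pos hne]
      have := hterm1 r hr
      have := Finset.card_pos.mpr hne
      omega
    · rw [if_neg hne, Finset.card_eq_zero.mpr (Finset.not_nonempty_iff_eq_empty.mp hne)]
  have hBkcard : Bk.card = Dk.card := aux_valid_card hXdisj ⟨hBsub, hBcard⟩
  have hABsplit : (A ∩ (Bk ∪ Gk)).card = (A ∩ Bk).card + (A ∩ Gk).card := by
    rw [Finset.inter_union_distrib_left]
    exact Finset.card_union_of_disjoint (hBGdisj.mono Finset.inter_subset_right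
      Finset.inter_subset_right)
  have hBA_card : (Bk \ A).card = Bk.card - (A ∩ Bk).card := by
    have h1 : Bk \ A = Bk \ (A ∩ Bk) := by ext x; simp only [Finset.mem_sdiff, Finset.mem_inter]; tauto
    rw [h1, Finset.card_sdiff_of_subset Finset.inter_subset_right]
  have hABle : (A ∩ Bk).card ≤ Bk.card := Finset.card_le_card Finset.inter_subset_right
  set a := (A ∩ (Bk ∪ Gk)).card with hadef
  have hWcard : W.card = Dk.card - (A ∩ Bk).card := by omega
  have hWge : Dk.card - a ≤ W.card := by omega
  obtain ⟨D', hD'W, hD'card⟩ := Finset.exists_subset_card_eq hWge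
  have hWD : W ⊆ Dk := Finset.filter_subset _ _
  refine ⟨D', hD'W.trans hWD, hD'card, ?_⟩
  -- term function
  set term : ι → ℝ := fun r => ∑ x ∈ (Bk ∩ Xact r) \ A, f {x} with hterm
  have htermnn : ∀ r, 0 ≤ term r := fun r => Finset.sum_nonneg (fun x _ => hfnn {x})
  have hsum1 : ∑ x ∈ (Bk ∪ Gk) \ A, f {x} = ∑ x ∈ Bk \ A, f {x} + ∑ x ∈ Gk \ A, f {x} := by
    rw [Finset.union_sdiff_distrib]
    exact Finset.sum_union (hBGdisj.mono Finset.sdiff_subset Finset.sdiff_subset)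
  have hsum2 : ∑ x ∈ Bk \ A, f {x} = ∑ r ∈ Dk, term r := by
    rw [hBA_eq]; exact Finset.sum_biUnion hpd
  have hsum3 : ∑ r ∈ W, term r ≤ ∑ r ∈ Dk, term r :=
    Finset.sum_le_sum_of_subset_of_nonneg hWD (fun r _ _ => htermnn r)
  have hsum4 : ∑ r ∈ W \ D', term r + ∑ r ∈ D', term r = ∑ r ∈ W, term r :=
    Finset.sum_sdiff hD'W
  have hdom1 : ∀ r ∈ D', f {s' r} ≤ term r := by
    intro r hr
    have hrW : r ∈ W := hD'W hr
    have hrD : r ∈ Dk := hWD hrW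
    obtain ⟨b, hb⟩ := (Finset.mem_filter.mp hrW).2
    have hbB : b ∈ Bk ∩ Xact r := (Finset.mem_sdiff.mp hb).1
    have hfb : f {s' r} ≤ f {b} :=
      hbait r hrD b hbB (s' r) (Finset.mem_union_left _ (hs' r hrD))
    calc f {s' r} ≤ f {b} := hfb
    _ ≤ term r := Finset.single_le_sum (fun x _ => hfnn {x}) hb
  have hdom2 : ∑ g ∈ A ∩ Gk, f {g} ≤ ∑ r ∈ W \ D', term r := by
    apply aux_match
    · rw [Finset.card_sdiff_of_subset hD'W, hD'card, hWcard]
      omega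
    · intro r hr g hg
      have hrW : r ∈ W := (Finset.mem_sdiff.mp hr).1
      have hrD : r ∈ Dk := hWD hrW
      obtain ⟨b, hb⟩ := (Finset.mem_filter.mp hrW).2
      have hbB : b ∈ Bk ∩ Xact r := (Finset.mem_sdiff.mp hb).1
      have hgG : g ∈ Gk := (Finset.mem_inter.mp hg).2
      have hgbig : g ∈ Xact r ∪ CDk.biUnion Xact := Finset.mem_union_right _ (hGsub hgG)
      calc f {g} ≤ f {b} := hbait r hrD b hbB g hgbig
      _ ≤ term r := Finset.single_le_sum (fun x _ => hfnn {x}) hb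
  have hsum5 : ∑ x ∈ Gk \ A, f {x} + ∑ g ∈ A ∩ Gk, f {g} = ∑ g ∈ Gk, f {g} := by
    have h1 : Gk \ A = Gk \ (A ∩ Gk) := by ext x; simp only [Finset.mem_sdiff, Finset.mem_inter]; tauto
    rw [h1]
    exact Finset.sum_sdiff Finset.inter_subset_right
  have hGle : f Gk ≤ ∑ g ∈ Gk, f {g} := aux_sing hsub hnorm Gk
  have hD'le : ∑ r ∈ D', f {s' r} ≤ ∑ r ∈ D', term r := Finset.sum_le_sum hdom1
  linarith

/-- Theorem 2 of the paper: approximation guarantee of DRM, with the structural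
properties of DRM's output as explicit hypotheses. -/
theorem drm_approximation_guarantee
    {X ι : Type*} [Fintype X] [DecidableEq X] [Fintype ι] [DecidableEq ι]
    (f : Finset X → ℝ) (ν : ℝ)
    (hmono : IsMonotoneFn f) (hsub : IsSubmodularFn f) (hnorm : IsNormalizedFn f)
    (hcurv : CurvatureLE f ν)
    (Xact : ι → Finset X)
    (hXne : ∀ i : ι, (Xact i).Nonempty)
    (hXdisj : ∀ i j : ι, i ≠ j → Disjoint (Xact i) (Xact j))
    (R : Finset ι) (K : ℕ) (C : Fin K → Finset ι)
    (hCne : ∀ k, (C k).Nonempty)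
    (hCdisj : ∀ k l, k ≠ l → Disjoint (C k) (C l))
    (hCunion : Finset.univ.biUnion C = R)
    (α : ℕ)
    (D : Fin K → Finset ι) (B G : Fin K → Finset X)
    (hD : ∀ k, D k ⊆ C k)
    (hDcard : ∀ k, (D k).card = min α (C k).card)
    (hB : ∀ k, ValidAssign Xact (D k) (B k))
    (hG : ∀ k, ValidAssign Xact (C k \ D k) (G k))
    (hbait : ∀ k, ∀ r ∈ D k, ∀ b ∈ B k ∩ Xact r,
      ∀ x ∈ Xact r ∪ (C k \ D k).biUnion Xact, f {b} ≥ f {x})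
    (hgreedy : ∀ k, ∀ T : Finset X, ValidAssign Xact (C k \ D k) T →
      f (G k) ≥ (1 / 2) * f T)
    (S : Finset X) (hS : S = Finset.univ.biUnion (fun k => B k ∪ G k)) :
    ∀ A ⊆ S, A.card ≤ α → ∀ S' : Finset X, ValidAssign Xact R S' →
      ∃ A' ⊆ S', A'.card ≤ α ∧ f (S \ A) ≥ ((1 - ν) / 2) * f (S' \ A') := by
  
  classical
  intro A hAS hAcard S' hS'
  have hfnn : ∀ T : Finset X, 0 ≤ f T := aux_nonneg hmono hnorm
  rcases le_or_gt (1 - ν) 0 with hν | hν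
  · refine ⟨∅, Finset.empty_subset _, by simp, ?_⟩
    have h1 : 0 ≤ f (S' \ ∅) := hfnn _
    have h2 : (1 - ν) / 2 ≤ 0 := by linarith
    calc ((1 - ν) / 2) * f (S' \ ∅) ≤ 0 := mul_nonpos_of_nonpos_of_nonneg h2 h1
    _ ≤ f (S \ A) := hfnn _
  obtain ⟨hS'sub, hS'card⟩ := hS'
  have hCsub : ∀ k, C k ⊆ R := fun k => by
    rw [← hCunion]; exact Finset.subset_biUnion_of_mem C (Finset.mem_univ k)
  -- the action chosen by S' for each robot
  have hg'ex : ∀ r : ι, ∃ x : X, r ∈ R → S' ∩ Xact r = {x} := by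
    intro r
    by_cases hr : r ∈ R
    · obtain ⟨x, hx⟩ := Finset.card_eq_one.mp (hS'card r hr)
      exact ⟨x, fun _ => hx⟩
    · exact ⟨(hXne r).choose, fun h => absurd h hr⟩
  choose g' hg' using hg'ex
  have hg'mem : ∀ r ∈ R, g' r ∈ Xact r := fun r hr =>
    (Finset.mem_inter.mp (by rw [hg' r hr]; exact Finset.mem_singleton_self _)).2
  -- per clique facts
  have hBGsub : ∀ k, B k ∪ G k ⊆ (C k).biUnion Xact := fun k =>
    Finset.union_subset
      ((hB k).1.trans (Finset.biUnion_subset_biUnion_of_subset_left Xact (hD k)))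
      ((hG k).1.trans (Finset.biUnion_subset_biUnion_of_subset_left Xact Finset.sdiff_subset))
  have hBGdisjK : ∀ k l, k ≠ l → Disjoint (B k ∪ G k) (B l ∪ G l) := fun k l hkl =>
    (aux_disjU Xact hXdisj (hCdisj k l hkl)).mono (hBGsub k) (hBGsub l)
  set a : Fin K → ℕ := fun k => (A ∩ (B k ∪ G k)).card with hadef
  have hBGcard : ∀ k, (B k ∪ G k).card = (C k).card := by
    intro k
    have hdBG : Disjoint (B k) (G k) :=
      (aux_disjU Xact hXdisj (Finset.disjoint_sdiff (s := D k) (t := C k))).mono (hB k).1 (hG k).1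
    rw [Finset.card_union_of_disjoint hdBG, aux_valid_card hXdisj (hB k),
      aux_valid_card hXdisj (hG k)]
    have h1 := Finset.card_sdiff_of_subset (hD k)
    have h2 := Finset.card_le_card (hD k)
    omega
  have hak_le : ∀ k, a k ≤ (D k).card := by
    intro k
    rw [hDcard]
    have h1 : a k ≤ α :=
      le_trans (Finset.card_le_card Finset.inter_subset_left) hAcard
    have h2 : a k ≤ (C k).card := by
      rw [← hBGcard k]; exact Finset.card_le_card Finset.inter_subset_right
    omega
  -- apply the per-clique lemma
  have hclique : ∀ k, ∃ D' ⊆ D k, D'.card = (D k).card - a k ∧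
      f (G k) + ∑ r ∈ D', f {g' r} ≤ ∑ x ∈ (B k ∪ G k) \ A, f {x} := by
    intro k
    exact clique_sum f hmono hsub hnorm Xact hXdisj (D k) (C k \ D k)
      (Finset.disjoint_sdiff) (B k) (G k) (hB k) (hG k) (hbait k) A (hak_le k) g'
      (fun r hr => hg'mem r (hCsub k (hD k hr)))
  choose D' hD'sub hD'card hD'ineq using hclique
  -- the attack on S'
  set U : Finset ι := Finset.univ.biUnion (fun k => D k \ D' k) with hUdef
  set A' : Finset X := S' ∩ U.biUnion Xact with hA'def
  have hUR : U ⊆ R := by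
    intro r hr
    obtain ⟨k, _, hk⟩ := Finset.mem_biUnion.mp hr
    exact hCsub k (hD k (Finset.mem_sdiff.mp hk).1)
  refine ⟨A', Finset.inter_subset_left, ?_, ?_⟩
  · -- cardinality of A'
    have hA'eq : A' = U.biUnion (fun r => S' ∩ Xact r) := by
      ext x
      simp only [hA'def, Finset.mem_inter, Finset.mem_biUnion]
      tauto
    have hAeq : A = Finset.univ.biUnion (fun k => A ∩ (B k ∪ G k)) := by
      ext x
      simp only [Finset.mem_biUnion, Finset.mem_inter]
      constructor
      · intro hx
        have hxS : x ∈ S := hAS hx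
        rw [hS] at hxS
        obtain ⟨k, hk, hxk⟩ := Finset.mem_biUnion.mp hxS
        exact ⟨k, hk, hx, hxk⟩
      · rintro ⟨k, _, hx, _⟩; exact hx
    have hAcard2 : A.card = ∑ k, a k := by
      conv_lhs => rw [hAeq]
      exact Finset.card_biUnion (fun k _ l _ hkl =>
        (hBGdisjK k l hkl).mono Finset.inter_subset_right Finset.inter_subset_right)
    calc A'.card ≤ ∑ r ∈ U, (S' ∩ Xact r).card := by
          rw [hA'eq]; exact Finset.card_biUnion_le
    _ = ∑ r ∈ U, 1 := Finset.sum_congr rfl (fun r hr => hS'card r (hUR hr))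
    _ = U.card := by rw [Finset.sum_const, smul_eq_mul, mul_one]
    _ = ∑ k, (D k \ D' k).card := Finset.card_biUnion (fun k _ l _ hkl =>
          (hCdisj k l hkl).mono (Finset.sdiff_subset.trans (hD k))
            (Finset.sdiff_subset.trans (hD l)))
    _ = ∑ k, a k := Finset.sum_congr rfl (fun k _ => by
          rw [Finset.card_sdiff_of_subset (hD'sub k), hD'card k]
          have := hak_le k; omega)
    _ = A.card := hAcard2.symm
    _ ≤ α := hAcard
  · -- the value inequality
    set T' : Fin K → Finset X := fun k => S' ∩ (C k \ D k).biUnion Xact with hT'def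
    have hT'valid : ∀ k, ValidAssign Xact (C k \ D k) (T' k) := by
      intro k
      refine ⟨Finset.inter_subset_right, fun i hi => ?_⟩
      have h1 : T' k ∩ Xact i = S' ∩ Xact i := by
        rw [hT'def, Finset.inter_assoc,
          Finset.inter_eq_right.mpr (Finset.subset_biUnion_of_mem Xact hi)]
      rw [h1]
      exact hS'card i (hCsub k (Finset.mem_sdiff.mp hi).1)
    set DD : Finset ι := Finset.univ.biUnion D' with hDDdef
    have hDDR : ∀ r ∈ DD, r ∈ R := by
      intro r hr
      obtain ⟨k, _, hk⟩ := Finset.mem_biUnion.mp hr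
      exact hCsub k (hD k (hD'sub k hk))
    have hsubset : S' \ A' ⊆ (Finset.univ.biUnion T') ∪ DD.biUnion (fun r => S' ∩ Xact r) := by
      intro x hx
      obtain ⟨hxS', hxA'⟩ := Finset.mem_sdiff.mp hx
      obtain ⟨i, hiR, hxi⟩ := Finset.mem_biUnion.mp (hS'sub hxS')
      rw [← hCunion] at hiR
      obtain ⟨k, _, hik⟩ := Finset.mem_biUnion.mp hiR
      by_cases hiD : i ∈ D k
      · by_cases hiD' : i ∈ D' k
        · refine Finset.mem_union_right _ (Finset.mem_biUnion.mpr ⟨i, ?_, ?_⟩)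
          · exact Finset.mem_biUnion.mpr ⟨k, Finset.mem_univ k, hiD'⟩
          · exact Finset.mem_inter.mpr ⟨hxS', hxi⟩
        · exfalso
          apply hxA'
          refine Finset.mem_inter.mpr ⟨hxS', Finset.mem_biUnion.mpr ⟨i, ?_, hxi⟩⟩
          exact Finset.mem_biUnion.mpr ⟨k, Finset.mem_univ k, Finset.mem_sdiff.mpr ⟨hiD, hiD'⟩⟩
      · refine Finset.mem_union_left _ (Finset.mem_biUnion.mpr ⟨k, Finset.mem_univ k, ?_⟩)
        exact Finset.mem_inter.mpr ⟨hxS',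
          Finset.mem_biUnion.mpr ⟨i, Finset.mem_sdiff.mpr ⟨hik, hiD⟩, hxi⟩⟩
    have h1 : f (S' \ A') ≤ ∑ k, f (T' k) + ∑ r ∈ DD, f (S' ∩ Xact r) := by
      calc f (S' \ A') ≤ f ((Finset.univ.biUnion T') ∪ DD.biUnion (fun r => S' ∩ Xact r)) :=
            hmono hsubset
      _ ≤ f (Finset.univ.biUnion T') + f (DD.biUnion (fun r => S' ∩ Xact r)) :=
            aux_subadd hmono hsub hnorm _ _
      _ ≤ ∑ k, f (T' k) + ∑ r ∈ DD, f (S' ∩ Xact r) :=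
            add_le_add (aux_biUnion hmono hsub hnorm _ _) (aux_biUnion hmono hsub hnorm _ _)
    have h2 : ∑ r ∈ DD, f (S' ∩ Xact r) = ∑ k, ∑ r ∈ D' k, f {g' r} := by
      rw [hDDdef, Finset.sum_biUnion (fun k _ l _ hkl =>
        (hCdisj k l hkl).mono ((hD'sub k).trans (hD k)) ((hD'sub l).trans (hD l)))]
      refine Finset.sum_congr rfl (fun k _ => Finset.sum_congr rfl (fun r hr => ?_))
      rw [hg' r (hCsub k (hD k (hD'sub k hr)))]
    have h3 : ∀ k, f (T' k) ≤ 2 * f (G k) := fun k => by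
      have := hgreedy k (T' k) (hT'valid k); linarith
    have h4 : (1 - ν) * ∑ x ∈ S \ A, f {x} ≤ f (S \ A) := aux_curv hnorm hcurv _
    have h5 : ∑ x ∈ S \ A, f {x} = ∑ k, ∑ x ∈ (B k ∪ G k) \ A, f {x} := by
      rw [hS, aux_sdiff_biUnion]
      exact Finset.sum_biUnion (fun k _ l _ hkl =>
        (hBGdisjK k l hkl).mono Finset.sdiff_subset Finset.sdiff_subset)
    have h6 : ∑ k, (f (G k) + ∑ r ∈ D' k, f {g' r}) ≤ ∑ x ∈ S \ A, f {x} := by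
      rw [h5]
      exact Finset.sum_le_sum (fun k _ => hD'ineq k)
    set P : ℝ := ∑ k, f (G k) with hPdef
    set Qv : ℝ := ∑ k, ∑ r ∈ D' k, f {g' r} with hQdef
    have hQnn : 0 ≤ Qv :=
      Finset.sum_nonneg (fun k _ => Finset.sum_nonneg (fun r _ => hfnn _))
    have hPQ : P + Qv ≤ ∑ x ∈ S \ A, f {x} := by
      rw [hPdef, hQdef, ← Finset.sum_add_distrib]
      exact h6
    have hA1 : (1 - ν) * (P + Qv) ≤ f (S \ A) :=
      le_trans (mul_le_mul_of_nonneg_left hPQ hν.le) h4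
    have hA2 : f (S' \ A') ≤ 2 * P + Qv := by
      have hT'sum : ∑ k, f (T' k) ≤ ∑ k, 2 * f (G k) :=
        Finset.sum_le_sum (fun k _ => h3 k)
      have : (∑ k, 2 * f (G k)) = 2 * P := by rw [hPdef, Finset.mul_sum]
      rw [h2] at h1
      linarith
    have e1 : ((1 - ν) / 2) * f (S' \ A') ≤ ((1 - ν) / 2) * (2 * P + Qv) :=
      mul_le_mul_of_nonneg_left hA2 (by linarith)
    have e2 : ((1 - ν) / 2) * (2 * P + Qv) ≤ (1 - ν) * (P + Qv) := by
      nlinarith [mul_nonneg hν.le hQnn]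
    linarith
end

section
/- Let X be a finite ground set and f : Finset X → ℝ be monotone, submodular, and normalized, with curvature at most ν. Let R be a finite robot set and α a natural number. Suppose: (i) there is a set of bait robots D ⊆ R with |D| = min(α, |R|), a valid assignment B for D, and a valid assignment G for R \ D; (ii) for every bait action b ∈ B, assigned to robot r ∈ D, and every action x ∈ X_r ∪ ⋃_{i ∈ R \ D} X_i, one has f({b}) ≥ f({x}); and (iii) f(G) ≥ (1/2)·f(T) for every valid assignment T for R \ D. Let S = B ∪ G. Then for every attack A ⊆ S with |A| ≤ α and every valid assignment S' for R, there exists A' ⊆ S' with |A'| ≤ α such that f(S \ A) ≥ ((1 − ν)/2)·f(S' \ A'). -/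
/-!
The counter-attack `A'` removes from `S'` the actions of the bait robots, so `S' \ A'` is a valid
assignment for the non-bait robots and the greedy bound gives `f (S' \ A') ≤ 2 f G`. It remains to
show `(1 - ν) f G ≤ f (S \ A)`. Every greedy action the attacker removes is outweighed, in
singleton value, by a bait action that survives (there are at least as many surviving baits as
removed greedy actions). Subadditivity bounds the loss of `G` by the singleton values of the
removed greedy actions, and curvature shows that the surviving baits add at least `1 - ν` times
their singleton values to `G \ A`.
-/

open Finset

theorem Finset.sum_le_sum_of_card_le_of_forall_le {ι M : Type*} [AddCommMonoid M] [LinearOrder M]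
    [IsOrderedAddMonoid M] {P Q : Finset ι} {w : ι → M} (hcard : P.card ≤ Q.card)
    (hle : ∀ p ∈ P, ∀ q ∈ Q, w p ≤ w q) (hQ : ∀ q ∈ Q, 0 ≤ w q) :
    ∑ p ∈ P, w p ≤ ∑ q ∈ Q, w q := by
  obtain ⟨N, hNQ, hN⟩ := exists_subset_card_eq hcard
  refine le_trans ?_ (sum_le_sum_of_subset_of_nonneg hNQ fun q hq _ => hQ q hq)
  rcases P.eq_empty_or_nonempty with rfl | hP
  · rw [card_eq_zero.1 (hN.trans card_empty)]
  calc ∑ p ∈ P, w p ≤ P.card • P.sup' hP w := sum_le_card_nsmul _ _ _ fun p hp => le_sup' w hp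
    _ = N.card • P.sup' hP w := by rw [hN]
    _ ≤ ∑ q ∈ N, w q :=
      card_nsmul_le_sum _ _ _ fun q hq => sup'_le hP w fun p hp => hle p hp q (hNQ hq)

theorem Finset.card_inter_le_card_sdiff {X : Type*} [DecidableEq X] {A B G : Finset X}
    (hBG : Disjoint B G) (hAB : A.card ≤ B.card) : (G ∩ A).card ≤ (B \ A).card := by
  have hB := card_sdiff_add_card_inter B A
  have hA : (B ∩ A).card + (G ∩ A).card ≤ A.card := by
    rw [← card_union_of_disjoint (hBG.mono inter_subset_left inter_subset_left)]
    exact card_le_card (union_subset inter_subset_right inter_subset_right)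
  omega

theorem IsMonotoneFn.nonneg {X : Type*} {f : Finset X → ℝ} (hmono : IsMonotoneFn f)
    (hnorm : IsNormalizedFn f) (T : Finset X) : 0 ≤ f T :=
  hnorm ▸ hmono (empty_subset T)

section SetFunction

variable {X : Type*} [DecidableEq X] {f : Finset X → ℝ} {ν : ℝ}

theorem IsSubmodularFn.le_add_sum_singleton (hsub : IsSubmodularFn f) (hmono : IsMonotoneFn f)
    (hnorm : IsNormalizedFn f) (W V : Finset X) : f (W ∪ V) ≤ f W + ∑ x ∈ V, f {x} := by
  induction V using Finset.induction_on with
  | empty => simp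
  | @insert x V hx ih =>
    rw [union_insert, sum_insert hx]
    by_cases hxWV : x ∈ W ∪ V
    · rw [insert_eq_self.mpr hxWV]
      linarith [hmono.nonneg hnorm {x}]
    · have hgain := hsub (empty_subset (W ∪ V)) x hxWV
      rw [insert_empty, hnorm] at hgain
      linarith

theorem CurvatureLE.add_sum_singleton_le (hcurv : CurvatureLE f ν) {M W : Finset X} (hMW : M ⊆ W) :
    f (W \ M) + (1 - ν) * ∑ b ∈ M, f {b} ≤ f W := by
  induction M using Finset.induction_on generalizing W with
  | empty => simp
  | @insert b M hb ih =>
    have hbW : b ∈ W := hMW (mem_insert_self b M)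
    have hM : M ⊆ W \ {b} := fun x hx =>
      mem_sdiff.2 ⟨hMW (mem_insert_of_mem hx), fun hxb => hb (mem_singleton.1 hxb ▸ hx)⟩
    have hstep := ih hM
    rw [sdiff_singleton_eq_erase, erase_sdiff_comm, ← sdiff_insert] at hstep
    have hcut := hcurv W b hbW
    rw [sdiff_singleton_eq_erase] at hcut
    rw [sum_insert hb]
    linarith

theorem CurvatureLE.eq_zero_of_neg (hcurv : CurvatureLE f ν) (hmono : IsMonotoneFn f)
    (hsub : IsSubmodularFn f) (hnorm : IsNormalizedFn f) (hν : ν < 0) (T : Finset X) : f T = 0 := by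
  have hlower := hcurv.add_sum_singleton_le (subset_refl T)
  have hupper := hsub.le_add_sum_singleton hmono hnorm ∅ T
  rw [Finset.sdiff_self, hnorm] at hlower
  rw [empty_union, hnorm] at hupper
  have hsum : 0 ≤ ∑ x ∈ T, f {x} := sum_nonneg fun x _ => hmono.nonneg hnorm {x}
  nlinarith [hmono.nonneg hnorm T]

theorem CurvatureLE.one_sub_mul_le_of_dominating (hcurv : CurvatureLE f ν) (hmono : IsMonotoneFn f) (hsub : IsSubmodularFn f)
    (hnorm : IsNormalizedFn f) (hν0 : 0 ≤ ν) (hν1 : ν ≤ 1) {A B G : Finset X}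
    (hBG : Disjoint B G) (hcard : (G ∩ A).card ≤ (B \ A).card)
    (hdom : ∀ b ∈ B, ∀ g ∈ G, f {g} ≤ f {b}) :
    (1 - ν) * f G ≤ f ((B ∪ G) \ A) := by
  have hbaits : f (G \ A) + (1 - ν) * ∑ b ∈ B \ A, f {b} ≤ f ((B ∪ G) \ A) := by
    have hkeep : ((B ∪ G) \ A) \ (B \ A) = G \ A := by
      ext x
      have hx : x ∈ B → x ∉ G := fun h => disjoint_left.1 hBG h
      simp only [mem_sdiff, mem_union]
      tauto
    simpa only [hkeep] using
      hcurv.add_sum_singleton_le (M := B \ A) (W := (B ∪ G) \ A)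
        (sdiff_subset_sdiff subset_union_left (subset_refl A))
  have hloss : f G ≤ f (G \ A) + ∑ g ∈ G ∩ A, f {g} := by
    simpa only [sdiff_union_inter] using hsub.le_add_sum_singleton hmono hnorm (G \ A) (G ∩ A)
  have hexchange : ∑ g ∈ G ∩ A, f {g} ≤ ∑ b ∈ B \ A, f {b} :=
    sum_le_sum_of_card_le_of_forall_le hcard
      (fun g hg b hb => hdom b (sdiff_subset hb) g (inter_subset_left hg))
      (fun b _ => hmono.nonneg hnorm {b})
  calc (1 - ν) * f G ≤ (1 - ν) * (f (G \ A) + ∑ g ∈ G ∩ A, f {g}) :=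
        mul_le_mul_of_nonneg_left hloss (by linarith)
    _ ≤ f (G \ A) + (1 - ν) * ∑ b ∈ B \ A, f {b} := by
        nlinarith [hmono.nonneg hnorm (G \ A)]
    _ ≤ f ((B ∪ G) \ A) := hbaits

end SetFunction

namespace ValidAssign

variable {X ι : Type*} [DecidableEq X] [DecidableEq ι] {Xact : ι → Finset X} {R D : Finset ι}
  {S : Finset X}

theorem card_eq (hXdisj : ∀ i j : ι, i ≠ j → Disjoint (Xact i) (Xact j))
    (hS : ValidAssign Xact R S) : S.card = R.card := by
  rw [← inter_eq_left.2 hS.1, inter_biUnion, card_biUnion, sum_congr rfl hS.2, card_eq_sum_ones]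
  exact fun i _ j _ hij =>
    (hXdisj i j hij).mono inter_subset_right inter_subset_right

theorem disjoint (hXdisj : ∀ i j : ι, i ≠ j → Disjoint (Xact i) (Xact j))
    {T : Finset X} (hS : ValidAssign Xact R S) (hT : ValidAssign Xact D T) (hRD : Disjoint R D) :
    Disjoint S T :=
  ((disjoint_biUnion_left _ _ _).2 fun i hi => (disjoint_biUnion_right _ _ _).2 fun j hj =>
    hXdisj i j fun hij => disjoint_left.1 hRD hi (hij ▸ hj)).mono hS.1 hT.1

theorem card_inter_biUnion_le (hS : ValidAssign Xact R S) (hD : D ⊆ R) :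
    (S ∩ D.biUnion Xact).card ≤ D.card := by
  rw [inter_biUnion]
  simpa using card_biUnion_le_card_mul D _ 1 fun i hi => (hS.2 i (hD hi)).le

theorem sdiff_biUnion (hXdisj : ∀ i j : ι, i ≠ j → Disjoint (Xact i) (Xact j))
    (hS : ValidAssign Xact R S) : ValidAssign Xact (R \ D) (S \ D.biUnion Xact) := by
  refine ⟨fun x hx => ?_, fun i hi => ?_⟩
  · obtain ⟨hxS, hxD⟩ := mem_sdiff.1 hx
    obtain ⟨i, hiR, hxi⟩ := mem_biUnion.1 (hS.1 hxS)
    exact mem_biUnion.2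
      ⟨i, mem_sdiff.2 ⟨hiR, fun hiD => hxD (mem_biUnion.2 ⟨i, hiD, hxi⟩)⟩, hxi⟩
  · obtain ⟨hiR, hiD⟩ := mem_sdiff.1 hi
    have hfar : Disjoint (Xact i) (D.biUnion Xact) := (disjoint_biUnion_right _ _ _).2
      fun j hj => hXdisj i j fun hij => hiD (hij ▸ hj)
    rw [sdiff_inter_right_comm, sdiff_eq_self_of_disjoint (hfar.mono_left inter_subset_right)]
    exact hS.2 i hiR

end ValidAssign

theorem central_robust_approximation_guarantee_general
    {X ι : Type*} [DecidableEq X] [DecidableEq ι]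
    (f : Finset X → ℝ) (ν : ℝ)
    (hmono : IsMonotoneFn f) (hsub : IsSubmodularFn f) (hnorm : IsNormalizedFn f)
    (hcurv : CurvatureLE f ν)
    (Xact : ι → Finset X)
    (hXdisj : ∀ i j : ι, i ≠ j → Disjoint (Xact i) (Xact j))
    (R : Finset ι) (α : ℕ)
    (D : Finset ι) (B G : Finset X)
    (hD : D ⊆ R)
    (hDcard : D.card = min α R.card)
    (hB : ValidAssign Xact D B)
    (hG : ValidAssign Xact (R \ D) G)
    (hbait : ∀ r ∈ D, ∀ b ∈ B ∩ Xact r,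
      ∀ x ∈ Xact r ∪ (R \ D).biUnion Xact, f {b} ≥ f {x})
    (hgreedy : ∀ T : Finset X, ValidAssign Xact (R \ D) T → f G ≥ (1 / 2) * f T)
    (S : Finset X) (hS : S = B ∪ G) :
    ∀ A ⊆ S, A.card ≤ α → ∀ S' : Finset X, ValidAssign Xact R S' →
      ∃ A' ⊆ S', A'.card ≤ α ∧ f (S \ A) ≥ ((1 - ν) / 2) * f (S' \ A') := by
  subst hS
  intro A _ hAcard S' hS'
  refine ⟨S' ∩ D.biUnion Xact, inter_subset_left,
    (hS'.card_inter_biUnion_le hD).trans (hDcard ▸ min_le_left α R.card), ?_⟩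
  have hcounter := hgreedy _ (hS'.sdiff_biUnion (D := D) hXdisj)
  rw [sdiff_inter_self_left]
  rcases lt_or_ge ν 0 with hν0 | hν0
  · simp [hcurv.eq_zero_of_neg hmono hsub hnorm hν0]
  rcases lt_or_ge 1 ν with hν1 | hν1
  · nlinarith [hmono.nonneg hnorm ((B ∪ G) \ A), hmono.nonneg hnorm (S' \ D.biUnion Xact)]
  have hBG : Disjoint B G := hB.disjoint hXdisj hG disjoint_sdiff
  have hcard : (G ∩ A).card ≤ (B \ A).card := by
    rcases le_or_gt α R.card with hα | hα
    · refine card_inter_le_card_sdiff hBG ?_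
      rwa [hB.card_eq hXdisj, hDcard, min_eq_left hα]
    · have hDR : D = R := eq_of_subset_of_card_le hD (by omega)
      have hG0 : G = ∅ := subset_empty.1 (by simpa [hDR] using hG.1)
      simp [hG0]
  have hdom : ∀ b ∈ B, ∀ g ∈ G, f {g} ≤ f {b} := fun b hb g hg => by
    obtain ⟨r, hr, hbr⟩ := mem_biUnion.1 (hB.1 hb)
    exact hbait r hr b (mem_inter.2 ⟨hb, hbr⟩) g (mem_union_right _ (hG.1 hg))
  nlinarith [hcurv.one_sub_mul_le_of_dominating hmono hsub hnorm hν0 hν1 hBG hcard hdom]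

/-- Single-clique case (K = 1) of Theorem 2: guarantee of the centralized
bait-plus-greedy algorithm `central-robust` against `α` worst-case attacks. -/
theorem central_robust_approximation_guarantee
    {X ι : Type*} [Fintype X] [DecidableEq X] [Fintype ι] [DecidableEq ι]
    (f : Finset X → ℝ) (ν : ℝ)
    (hmono : IsMonotoneFn f) (hsub : IsSubmodularFn f) (hnorm : IsNormalizedFn f)
    (hcurv : CurvatureLE f ν)
    (Xact : ι → Finset X)
    (hXne : ∀ i : ι, (Xact i).Nonempty)
    (hXdisj : ∀ i j : ι, i ≠ j → Disjoint (Xact i) (Xact j))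
    (R : Finset ι) (α : ℕ)
    (D : Finset ι) (B G : Finset X)
    (hD : D ⊆ R)
    (hDcard : D.card = min α R.card)
    (hB : ValidAssign Xact D B)
    (hG : ValidAssign Xact (R \ D) G)
    (hbait : ∀ r ∈ D, ∀ b ∈ B ∩ Xact r,
      ∀ x ∈ Xact r ∪ (R \ D).biUnion Xact, f {b} ≥ f {x})
    (hgreedy : ∀ T : Finset X, ValidAssign Xact (R \ D) T → f G ≥ (1 / 2) * f T)
    (S : Finset X) (hS : S = B ∪ G) :
    ∀ A ⊆ S, A.card ≤ α → ∀ S' : Finset X, ValidAssign Xact R S' →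
      ∃ A' ⊆ S', A'.card ≤ α ∧ f (S \ A) ≥ ((1 - ν) / 2) * f (S' \ A') :=
  central_robust_approximation_guarantee_general f ν hmono hsub hnorm hcurv Xact hXdisj R α D B G hD
    hDcard hB hG hbait hgreedy S hS
end

section
/- Let X be a finite ground set and f : Finset X → ℝ be monotone, submodular, and normalized, with curvature at most ν. Let R be a finite robot set and α a natural number with α ≤ |R|. Let S = {s_i : i ∈ R} be the myopic assignment, i.e., a valid assignment for R such that for every robot i ∈ R, the chosen action s_i ∈ X_i satisfies f({s_i}) ≥ f({x}) for every x ∈ X_i. Then for every attack A ⊆ S with |A| ≤ α and every valid assignment S' for R, there exists A' ⊆ S' with |A'| ≤ α such that f(S \ A) ≥ (1 − ν)·f(S' \ A'). In other words, min_{A ⊆ S, |A| ≤ α} f(S \ A) ≥ (1 − ν)·max_{S' valid for R} min_{A' ⊆ S', |A'| ≤ α} f(S' \ A'). -/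
section Aux
variable {X : Type*} [DecidableEq X] {f : Finset X → ℝ} {ν : ℝ}

lemma curv_lb (hnorm : IsNormalizedFn f) (hcurv : CurvatureLE f ν) :
    ∀ T : Finset X, (1 - ν) * ∑ x ∈ T, f {x} ≤ f T := by
  intro T
  have h0 : f ∅ = 0 := hnorm
  induction T using Finset.induction_on with
  | empty => simp [h0]
  | @insert x T hx ih =>
    have h := hcurv (insert x T) x (Finset.mem_insert_self x T)
    rw [Finset.sdiff_singleton_eq_erase, Finset.erase_insert hx] at h
    rw [Finset.sum_insert hx]
    nlinarith [h, ih]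

lemma subadd (hnorm : IsNormalizedFn f) (hsub : IsSubmodularFn f) :
    ∀ T : Finset X, f T ≤ ∑ x ∈ T, f {x} := by
  intro T
  have h0 : f ∅ = 0 := hnorm
  induction T using Finset.induction_on with
  | empty => simp [h0]
  | @insert x T hx ih =>
    have h := hsub (Finset.empty_subset T) x hx
    rw [Finset.sum_insert hx]
    rw [show (insert x (∅:Finset X)) = {x} by simp, h0] at h
    linarith

end Aux

/-- Theorem 3 of the paper: approximation guarantee of the myopic algorithm. -/
theorem myopic_approximation_guarantee
    {X ι : Type*} [Fintype X] [DecidableEq X] [Fintype ι] [DecidableEq ι]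
    (f : Finset X → ℝ) (ν : ℝ)
    (hmono : IsMonotoneFn f) (hsub : IsSubmodularFn f) (hnorm : IsNormalizedFn f)
    (hcurv : CurvatureLE f ν)
    (Xact : ι → Finset X)
    (hXne : ∀ i : ι, (Xact i).Nonempty)
    (hXdisj : ∀ i j : ι, i ≠ j → Disjoint (Xact i) (Xact j))
    (R : Finset ι) (α : ℕ) (hα : α ≤ R.card)
    (S : Finset X) (hSvalid : ValidAssign Xact R S)
    (hmyopic : ∀ i ∈ R, ∀ s ∈ S ∩ Xact i, ∀ x ∈ Xact i, f {s} ≥ f {x}) :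
    ∀ A ⊆ S, A.card ≤ α → ∀ S' : Finset X, ValidAssign Xact R S' →
      ∃ A' ⊆ S', A'.card ≤ α ∧ f (S \ A) ≥ (1 - ν) * f (S' \ A') := by
  intro A hAS hAcard S' hS'valid
  have hfx0 : ∀ x : X, 0 ≤ f ({x} : Finset X) := by
    intro x
    have := hmono (Finset.empty_subset ({x} : Finset X))
    rw [hnorm] at this; exact this
  have hf0 : ∀ T : Finset X, 0 ≤ f T := by
    intro T
    have := hmono (Finset.empty_subset T)
    rw [hnorm] at this; exact this
  set RA : Finset ι := R.filter (fun i => (A ∩ Xact i).Nonempty) with hRA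
  set A' : Finset X := S' ∩ RA.biUnion Xact with hA'
  -- decomposition lemma
  have decomp : ∀ (T : Finset X) (R' : Finset ι), T ⊆ R'.biUnion Xact →
      T = R'.biUnion (fun i => T ∩ Xact i) := by
    intro T R' hT
    ext x
    simp only [Finset.mem_biUnion, Finset.mem_inter]
    constructor
    · intro hx
      obtain ⟨i, hi, hxi⟩ := Finset.mem_biUnion.mp (hT hx)
      exact ⟨i, hi, hx, hxi⟩
    · rintro ⟨i, hi, hx, -⟩; exact hx
  have pdisj : ∀ (T : Finset X) (R' : Finset ι),
      ∀ i ∈ R', ∀ j ∈ R', i ≠ j → Disjoint (T ∩ Xact i) (T ∩ Xact j) := by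
    intro T R' i _ j _ hij
    exact (hXdisj i j hij).mono Finset.inter_subset_right Finset.inter_subset_right
  -- card of A'
  have hA'card : A'.card ≤ α := by
    have hA'eq : A' = RA.biUnion (fun i => S' ∩ Xact i) := by
      rw [hA', Finset.inter_comm, Finset.biUnion_inter]
      congr 1; ext i; rw [Finset.inter_comm]
    have h1 : A'.card = RA.card := by
      rw [hA'eq, Finset.card_biUnion (pdisj S' RA)]
      rw [Finset.card_eq_sum_ones RA]
      exact Finset.sum_congr rfl (fun i hi => hS'valid.2 i (Finset.mem_filter.mp hi).1)
    have hAR : A ⊆ R.biUnion Xact := hAS.trans hSvalid.1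
    have h2 : RA.card ≤ A.card := by
      have hAeq := decomp A R hAR
      have : A.card = ∑ i ∈ R, (A ∩ Xact i).card := by
        conv_lhs => rw [hAeq]
        exact Finset.card_biUnion (pdisj A R)
      rw [this, Finset.card_eq_sum_ones RA]
      calc ∑ i ∈ RA, 1 ≤ ∑ i ∈ RA, (A ∩ Xact i).card := by
            apply Finset.sum_le_sum
            intro i hi
            exact Finset.card_pos.mpr (Finset.mem_filter.mp hi).2
        _ ≤ ∑ i ∈ R, (A ∩ Xact i).card :=
            Finset.sum_le_sum_of_subset (Finset.filter_subset _ R)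
    omega
  refine ⟨A', Finset.inter_subset_left, hA'card, ?_⟩
  rcases le_or_gt (1 - ν) 0 with hν | hν
  · calc (1 - ν) * f (S' \ A') ≤ 0 := mul_nonpos_of_nonpos_of_nonneg hν (hf0 _)
      _ ≤ f (S \ A) := hf0 _
  -- main case
  have key : ∑ x ∈ S' \ A', f {x} ≤ ∑ x ∈ S \ A, f {x} := by
    have hSA : S \ A ⊆ R.biUnion Xact := (Finset.sdiff_subset).trans hSvalid.1
    have hS'A' : S' \ A' ⊆ R.biUnion Xact := (Finset.sdiff_subset).trans hS'valid.1
    have pd : ∀ T : Finset X, Set.PairwiseDisjoint (↑R) (fun i => T ∩ Xact i) := by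
      intro T i hi j hj hij
      exact pdisj T R i hi j hj hij
    rw [decomp (S \ A) R hSA, decomp (S' \ A') R hS'A',
      Finset.sum_biUnion (pd _), Finset.sum_biUnion (pd _)]
    apply Finset.sum_le_sum
    intro i hi
    by_cases hiRA : i ∈ RA
    · -- attacked robot: S' \ A' side is empty
      have : (S' \ A') ∩ Xact i = ∅ := by
        ext x
        simp only [Finset.mem_inter, Finset.mem_sdiff, Finset.notMem_empty, iff_false]
        rintro ⟨⟨hxS', hxA'⟩, hxi⟩
        exact hxA' (Finset.mem_inter.mpr ⟨hxS', Finset.mem_biUnion.mpr ⟨i, hiRA, hxi⟩⟩)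
      rw [this]
      simp only [Finset.sum_empty]
      exact Finset.sum_nonneg (fun x _ => hfx0 x)
    · -- unattacked robot
      have hAi : A ∩ Xact i = ∅ := by
        by_contra h
        exact hiRA (Finset.mem_filter.mpr ⟨hi, Finset.nonempty_iff_ne_empty.mpr h⟩)
      have hSAi : (S \ A) ∩ Xact i = S ∩ Xact i := by
        ext x
        simp only [Finset.mem_inter, Finset.mem_sdiff]
        constructor
        · rintro ⟨⟨h1, _⟩, h2⟩; exact ⟨h1, h2⟩
        · rintro ⟨h1, h2⟩
          refine ⟨⟨h1, fun hxA => ?_⟩, h2⟩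
          have : x ∈ A ∩ Xact i := Finset.mem_inter.mpr ⟨hxA, h2⟩
          rw [hAi] at this; exact absurd this (Finset.notMem_empty x)
      obtain ⟨s, hs⟩ := Finset.card_eq_one.mp (hSvalid.2 i hi)
      obtain ⟨s', hs'⟩ := Finset.card_eq_one.mp (hS'valid.2 i hi)
      rw [hSAi, hs, Finset.sum_singleton]
      calc ∑ x ∈ (S' \ A') ∩ Xact i, f {x}
          ≤ ∑ x ∈ S' ∩ Xact i, f {x} := by
            apply Finset.sum_le_sum_of_subset_of_nonneg
            · exact Finset.inter_subset_inter Finset.sdiff_subset le_rfl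
            · intro x _ _; exact hfx0 x
        _ = f {s'} := by rw [hs', Finset.sum_singleton]
        _ ≤ f {s} := by
            apply hmyopic i hi s (hs ▸ Finset.mem_singleton_self s)
            have : s' ∈ S' ∩ Xact i := hs' ▸ Finset.mem_singleton_self s'
            exact (Finset.mem_inter.mp this).2
  calc (1 - ν) * f (S' \ A') ≤ (1 - ν) * ∑ x ∈ S' \ A', f {x} :=
        mul_le_mul_of_nonneg_left (subadd hnorm hsub _) hν.le
    _ ≤ (1 - ν) * ∑ x ∈ S \ A, f {x} := mul_le_mul_of_nonneg_left key hν.le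
    _ ≤ f (S \ A) := curv_lb hnorm hcurv _
end

section
/- Let X be a finite ground set, w : X → ℝ a weight function, and B, G ⊆ X disjoint finite sets such that w(b) ≥ w(g) for every b ∈ B and g ∈ G. Let A ⊆ B ∪ G with |A| ≤ |B|. Then there exists a set B'' ⊆ B \ A with |B''| = |B \ A| − |A ∩ G| such that Σ_{x ∈ (B ∪ G) \ A} w(x) ≥ Σ_{x ∈ B''} w(x) + Σ_{g ∈ G} w(g). -/
/-!
Since `|A| ≤ |B|` and `A ∩ B`, `A ∩ G` are disjoint parts of `A`, the surviving bait `B \ A`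
has at least `|A ∩ G|` elements. Set aside `|A ∩ G|` of them: each weighs at least as much
as any greedy action, so together they outweigh the attacked greedy actions `A ∩ G`, and
what is left of `B \ A` is the required `B''`.
-/

open Finset

theorem Finset.sum_le_sum_of_card_eq_of_forall_le {ι κ M : Type*} [AddCommMonoid M]
    [LinearOrder M] [IsOrderedAddMonoid M] {s : Finset ι} {t : Finset κ} {f : ι → M}
    {g : κ → M} (hcard : #s = #t) (hle : ∀ i ∈ s, ∀ j ∈ t, g j ≤ f i) :
    ∑ j ∈ t, g j ≤ ∑ i ∈ s, f i := by
  rcases s.eq_empty_or_nonempty with rfl | hs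
  · simp [card_eq_zero.mp hcard.symm]
  calc ∑ j ∈ t, g j ≤ #t • s.inf' hs f :=
        sum_le_card_nsmul _ _ _ fun j hj => le_inf' hs f fun i hi => hle i hi j hj
    _ = #s • s.inf' hs f := by rw [hcard]
    _ ≤ ∑ i ∈ s, f i := card_nsmul_le_sum _ _ _ fun i hi => inf'_le f hi

theorem Finset.card_inter_le_card_sdiff_of_disjoint {α : Type*} [DecidableEq α]
    {A B G : Finset α} (hdisj : Disjoint B G) (hcard : #A ≤ #B) : #(A ∩ G) ≤ #(B \ A) := by
  have hparts : #(A ∩ B) + #(A ∩ G) ≤ #A := by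
    rw [← card_union_of_disjoint (hdisj.mono inter_subset_right inter_subset_right)]
    exact card_le_card (union_subset inter_subset_left inter_subset_left)
  have hB := card_sdiff_add_card_inter B A
  rw [inter_comm] at hB
  omega

theorem bait_compensation_exchange_general
    {X : Type*} [DecidableEq X]
    (w : X → ℝ) (B G : Finset X)
    (hdisj : Disjoint B G)
    (hdom : ∀ b ∈ B, ∀ g ∈ G, w b ≥ w g)
    (A : Finset X) (hAcard : A.card ≤ B.card) :
    ∃ B'' ⊆ B \ A, B''.card = (B \ A).card - (A ∩ G).card ∧
      ∑ x ∈ (B ∪ G) \ A, w x ≥ (∑ x ∈ B'', w x) + ∑ g ∈ G, w g := by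
  obtain ⟨S, hSsub, hScard⟩ :=
    exists_subset_card_eq (card_inter_le_card_sdiff_of_disjoint (A := A) hdisj hAcard)
  refine ⟨(B \ A) \ S, sdiff_subset, by rw [card_sdiff_of_subset hSsub, hScard], ?_⟩
  have hcompensate : ∑ g ∈ A ∩ G, w g ≤ ∑ s ∈ S, w s :=
    sum_le_sum_of_card_eq_of_forall_le hScard fun s hs g hg =>
      hdom s (sdiff_subset (hSsub hs)) g (inter_subset_right hg)
  calc ∑ x ∈ (B \ A) \ S, w x + ∑ g ∈ G, w g
      = ∑ x ∈ (B \ A) \ S, w x + ∑ g ∈ A ∩ G, w g + ∑ g ∈ G \ A, w g := by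
        rw [add_assoc, inter_comm, sum_inter_add_sum_sdiff]
    _ ≤ ∑ x ∈ (B \ A) \ S, w x + ∑ s ∈ S, w s + ∑ g ∈ G \ A, w g := by gcongr
    _ = ∑ x ∈ (B ∪ G) \ A, w x := by
        rw [sum_sdiff hSsub, union_sdiff_distrib,
          sum_union (hdisj.mono sdiff_subset sdiff_subset)]

/-- The bait-compensation exchange argument (steps (8)–(10) in the paper's proof of
Theorem 2): the surviving bait actions `B \ A`, whose weights dominate all greedy-action
weights, compensate for the attacked greedy actions `A ∩ G`. -/
theorem bait_compensation_exchange
    {X : Type*} [Fintype X] [DecidableEq X]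
    (w : X → ℝ) (B G : Finset X)
    (hdisj : Disjoint B G)
    (hdom : ∀ b ∈ B, ∀ g ∈ G, w b ≥ w g)
    (A : Finset X) (hA : A ⊆ B ∪ G) (hAcard : A.card ≤ B.card) :
    ∃ B'' ⊆ B \ A, B''.card = (B \ A).card - (A ∩ G).card ∧
      ∑ x ∈ (B ∪ G) \ A, w x ≥ (∑ x ∈ B'', w x) + ∑ g ∈ G, w g :=
  bait_compensation_exchange_general w B G hdisj hdom A hAcard
end
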